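/- Let C be the open baker's map with domain S, and define the backward trapped set Γ₊ as the set of points x ∈ [0,1)² admitting a full backward orbit: there exists a sequence (y_t)_{t∈ℕ} with y₀ = x and, for all t ∈ ℕ, y_{t+1} ∈ S and C(y_{t+1}) = y_t. Then Γ₊ = [0,1) × Can₀. -/

import Mathlib

/-!
A point `(q, p)` has exactly one candidate preimage under the baker map, obtained by reading off
the leading ternary digit `a = ⌊3p⌋` of `p`: it is `((q + a)/3, 3p - a)`, and it lies in the
domain `S` precisely when `a ≠ 1`. Going backwards thus shifts the ternary expansion of `p` by one
digit, so a full backward orbit exists iff no ternary digit of `p` equals `1`.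
-/

/-- The domain `S = ([0,1/3) ∪ [2/3,1)) × [0,1)` of the open baker's map. -/
def bakerDomain : Set (ℝ × ℝ) :=
  (Set.Ico (0 : ℝ) (1 / 3) ∪ Set.Ico (2 / 3 : ℝ) 1) ×ˢ Set.Ico (0 : ℝ) 1

/-- The Cantor-like set `Can₀` of points of `[0,1)` all of whose ternary digits
(in the floor convention `digit_n(q) = ⌊3^{n+1}·q⌋ mod 3`) differ from `1`. -/
def Can0 : Set ℝ :=
  {q : ℝ | q ∈ Set.Ico (0 : ℝ) 1 ∧ ∀ n : ℕ, ⌊(3 : ℝ) ^ (n + 1) * q⌋ % 3 ≠ 1}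

open Set

noncomputable def ternaryDigit (n : ℕ) (q : ℝ) : ℤ := ⌊(3 : ℝ) ^ (n + 1) * q⌋ % 3

theorem ternaryDigit_succ (n : ℕ) (q : ℝ) (a : ℤ) :
    ternaryDigit (n + 1) q = ternaryDigit n (3 * q - a) := by
  have h : (3 : ℝ) ^ (n + 1) * (3 * q - a) =
      (3 : ℝ) ^ (n + 1 + 1) * q - (3 * (3 ^ n * a) : ℤ) := by
    push_cast; ring
  rw [ternaryDigit, ternaryDigit, h, Int.floor_sub_intCast, Int.sub_mul_emod_self_left]

theorem ternaryDigit_zero_eq {q : ℝ} {a : ℤ} (h : 3 * q - a ∈ Ico (0 : ℝ) 1) :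
    ternaryDigit 0 q = a % 3 := by
  have hfloor : ⌊3 * q⌋ = a := Int.floor_eq_iff.mpr ⟨by linarith [h.1], by linarith [h.2]⟩
  rw [ternaryDigit, zero_add, pow_one, hfloor]

theorem floor_three_mul_eq_zero_or_two {q : ℝ} (hq : q ∈ Can0) :
    ⌊3 * q⌋ = 0 ∨ ⌊3 * q⌋ = 2 := by
  obtain ⟨⟨hq0, hq1⟩, hdigit⟩ := hq
  have hlo : 0 ≤ ⌊3 * q⌋ := Int.floor_nonneg.mpr (by linarith)
  have hhi : ⌊3 * q⌋ < 3 := Int.floor_lt.mpr (by push_cast; linarith)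
  have hne : ⌊3 * q⌋ % 3 ≠ 1 := by simpa using hdigit 0
  omega

theorem fract_three_mul_mem_Can0 {q : ℝ} (hq : q ∈ Can0) : Int.fract (3 * q) ∈ Can0 :=
  ⟨⟨Int.fract_nonneg _, Int.fract_lt_one _⟩, fun n => by
    change ternaryDigit n (3 * q - ⌊3 * q⌋) ≠ 1
    rw [← ternaryDigit_succ]
    exact hq.2 (n + 1)⟩

theorem exists_snd_eq_of_baker_apply {C : ℝ × ℝ → ℝ × ℝ}
    (hC0 : ∀ q p : ℝ, q ∈ Ico (0 : ℝ) (1 / 3) → C (q, p) = (3 * q, p / 3))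
    (hC2 : ∀ q p : ℝ, q ∈ Ico (2 / 3 : ℝ) 1 → C (q, p) = (3 * q - 2, (p + 2) / 3))
    {z : ℝ × ℝ} (hz : z ∈ bakerDomain) :
    ∃ a : ℤ, (a = 0 ∨ a = 2) ∧ 3 * (C z).2 - a = z.2 := by
  obtain ⟨q, p⟩ := z
  rcases hz.1 with hq | hq
  · exact ⟨0, Or.inl rfl, by rw [hC0 q p hq]; push_cast; ring⟩
  · exact ⟨2, Or.inr rfl, by rw [hC2 q p hq]; push_cast; ring⟩

theorem ternaryDigit_ne_one_of_backward_orbit {C : ℝ × ℝ → ℝ × ℝ}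
    (hC0 : ∀ q p : ℝ, q ∈ Ico (0 : ℝ) (1 / 3) → C (q, p) = (3 * q, p / 3))
    (hC2 : ∀ q p : ℝ, q ∈ Ico (2 / 3 : ℝ) 1 → C (q, p) = (3 * q - 2, (p + 2) / 3))
    {y : ℕ → ℝ × ℝ} (hy : ∀ t : ℕ, y (t + 1) ∈ bakerDomain ∧ C (y (t + 1)) = y t)
    (n t : ℕ) : ternaryDigit n (y t).2 ≠ 1 := by
  have hshift : ∀ t, ∃ a : ℤ, (a = 0 ∨ a = 2) ∧ 3 * (y t).2 - a = (y (t + 1)).2 := fun t =>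
    (hy t).2 ▸ exists_snd_eq_of_baker_apply hC0 hC2 (hy t).1
  obtain ⟨a, ha, hta⟩ := hshift t
  induction n generalizing t a with
  | zero =>
    rw [ternaryDigit_zero_eq (hta ▸ (hy t).1.2)]
    omega
  | succ n ih =>
    rw [ternaryDigit_succ n _ a, hta]
    obtain ⟨b, hb, htb⟩ := hshift (t + 1)
    exact ih (t + 1) b hb htb

noncomputable def bakerInv (x : ℝ × ℝ) : ℝ × ℝ :=
  ((x.1 + ⌊3 * x.2⌋) / 3, Int.fract (3 * x.2))

theorem mapsTo_bakerInv : MapsTo bakerInv (Ico 0 1 ×ˢ Can0) (Ico 0 1 ×ˢ Can0) := by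
  rintro ⟨q, p⟩ ⟨⟨hq0, hq1⟩, hp⟩
  refine ⟨?_, fract_three_mul_mem_Can0 hp⟩
  rcases floor_three_mul_eq_zero_or_two hp with ha | ha <;>
    simp only [bakerInv, ha] <;> constructor <;> push_cast <;> linarith

theorem bakerInv_mem_bakerDomain {x : ℝ × ℝ} (hx : x ∈ Ico 0 1 ×ˢ Can0) :
    bakerInv x ∈ bakerDomain := by
  obtain ⟨q, p⟩ := x
  obtain ⟨⟨hq0, hq1⟩, hp⟩ := hx
  refine ⟨?_, Int.fract_nonneg _, Int.fract_lt_one _⟩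
  rcases floor_three_mul_eq_zero_or_two hp with ha | ha
  · left; simp only [bakerInv, ha]; constructor <;> push_cast <;> linarith
  · right; simp only [bakerInv, ha]; constructor <;> push_cast <;> linarith

theorem baker_apply_bakerInv {C : ℝ × ℝ → ℝ × ℝ}
    (hC0 : ∀ q p : ℝ, q ∈ Ico (0 : ℝ) (1 / 3) → C (q, p) = (3 * q, p / 3))
    (hC2 : ∀ q p : ℝ, q ∈ Ico (2 / 3 : ℝ) 1 → C (q, p) = (3 * q - 2, (p + 2) / 3))
    {x : ℝ × ℝ} (hx : x ∈ Ico 0 1 ×ˢ Can0) : C (bakerInv x) = x := by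
  obtain ⟨q, p⟩ := x
  obtain ⟨⟨hq0, hq1⟩, hp⟩ := hx
  have hfract : Int.fract (3 * p) = 3 * p - ⌊3 * p⌋ := rfl
  rcases floor_three_mul_eq_zero_or_two hp with ha | ha
  · rw [bakerInv, hC0 _ _ (by simp only [ha]; constructor <;> push_cast <;> linarith), hfract, ha]
    ext <;> push_cast <;> ring
  · rw [bakerInv, hC2 _ _ (by simp only [ha]; constructor <;> push_cast <;> linarith), hfract, ha]
    ext <;> push_cast <;> ring

/-- for the open baker's map `C` with domain `S`, the backward trapped set
`Γ₊` — the set of points of `[0,1)²` admitting a full backward orbit — equals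
`[0,1) × Can₀`. -/
theorem stmt_13 (C : ℝ × ℝ → ℝ × ℝ)
    (hC0 : ∀ q p : ℝ, q ∈ Set.Ico (0 : ℝ) (1 / 3) → C (q, p) = (3 * q, p / 3))
    (hC2 : ∀ q p : ℝ, q ∈ Set.Ico (2 / 3 : ℝ) 1 → C (q, p) = (3 * q - 2, (p + 2) / 3)) :
    {x : ℝ × ℝ | x ∈ Set.Ico (0 : ℝ) 1 ×ˢ Set.Ico (0 : ℝ) 1 ∧
        ∃ y : ℕ → ℝ × ℝ, y 0 = x ∧
          ∀ t : ℕ, y (t + 1) ∈ bakerDomain ∧ C (y (t + 1)) = y t} =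
      Set.Ico (0 : ℝ) 1 ×ˢ Can0 := by
  ext x
  constructor
  · rintro ⟨hx, y, rfl, hy⟩
    exact ⟨hx.1, hx.2, fun n => ternaryDigit_ne_one_of_backward_orbit hC0 hC2 hy n 0⟩
  · intro hx
    refine ⟨⟨hx.1, hx.2.1⟩, fun t => bakerInv^[t] x, rfl, fun t => ?_⟩
    have horbit := mapsTo_bakerInv.iterate t hx
    show bakerInv^[t + 1] x ∈ bakerDomain ∧ C (bakerInv^[t + 1] x) = bakerInv^[t] x
    rw [Function.iterate_succ_apply']
    exact ⟨bakerInv_mem_bakerDomain horbit, baker_apply_bakerInv hC0 hC2 horbit⟩
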